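/- Forward move F1: If (α_n)_{n≥0}, (β_n)_{n≥0} form a Bailey pair with respect to base a (and a q^m ≠ 1 for all m ≥ 1), then the sequences β'_n = Σ_{j=0}^{n} (a^j q^{j²} / (q;q)_{n−j}) β_j and α'_n = a^n q^{n²} α_n also form a Bailey pair with respect to base a. -/

import Mathlib

open Finset

noncomputable def qPoch (a q : ℂ) (n : ℕ) : ℂ :=
  ∏ t ∈ Finset.range n, (1 - a * q ^ t)

noncomputable def qPochInf (a q : ℂ) : ℂ :=
  ∏' t : ℕ, (1 - a * q ^ t)

def IsBaileyPair (q a : ℂ) (α β : ℕ → ℂ) : Prop :=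
  ∀ n : ℕ, β n =
    ∑ t ∈ Finset.range (n + 1), α t / (qPoch q q (n - t) * qPoch (a * q) q (n + t))

/-!
Substituting the Bailey relation for `β j` and exchanging the two sums reduces the claim, for
each `t ≤ n`, to evaluating `∑_{j=t}^{n} a^j q^{j²} / ((q)_{n-j} (q)_{j-t} (aq)_{j+t})`.
With `j = t + k` and `b = a q^{2t}` this becomes the identity
`∑_{i+k=N} b^k q^{k²} / ((q)_i (q)_k (bq)_k) = 1 / ((q)_N (bq)_N)`,
proved by induction on `N` for all `b` at once: splitting `1 - q^{N+1} = (1 - q^k) + q^k (1 - q^i)`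
and shifting `k` resp. `i` by one turns `(1 - q^{N+1})` times the sum at `N + 1` into `1 / (1 - bq)`
times the sum at `N` with `b` replaced by `bq`.
-/

section QPochhammer

variable (a q : ℂ)

@[simp]
lemma qPoch_zero : qPoch a q 0 = 1 := by simp [qPoch]

lemma qPoch_succ_right (n : ℕ) : qPoch a q (n + 1) = qPoch a q n * (1 - a * q ^ n) :=
  prod_range_succ _ n

lemma qPoch_succ_left (n : ℕ) : qPoch a q (n + 1) = (1 - a) * qPoch (a * q) q n := by
  rw [qPoch, prod_range_succ', mul_comm]
  simp only [qPoch, pow_succ', pow_zero, mul_one, mul_assoc]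

lemma qPoch_add (m n : ℕ) : qPoch a q (m + n) = qPoch a q m * qPoch (a * q ^ m) q n := by
  simp only [qPoch, prod_range_add, pow_add, mul_assoc]

variable {a q}

lemma qPoch_ne_zero {n : ℕ} (h : ∀ t < n, a * q ^ t ≠ 1) : qPoch a q n ≠ 0 :=
  prod_ne_zero_iff.mpr fun t ht => sub_ne_zero.mpr (h t (mem_range.mp ht)).symm

lemma qPoch_mul_ne_zero {b : ℂ} (hb : ∀ m, 1 ≤ m → b * q ^ m ≠ 1) (n : ℕ) :
    qPoch (b * q) q n ≠ 0 :=
  qPoch_ne_zero fun t _ => by simpa [pow_succ', mul_assoc] using hb (t + 1) (by omega)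

lemma qPoch_self_ne_zero (hq : ∀ m, 1 ≤ m → q ^ m ≠ 1) (n : ℕ) : qPoch q q n ≠ 0 := by
  simpa using qPoch_mul_ne_zero (b := 1) (by simpa using hq) n

end QPochhammer

lemma pow_ne_one_of_norm_lt_one {q : ℂ} (hq1 : ‖q‖ < 1) {m : ℕ} (hm : 1 ≤ m) :
    q ^ m ≠ 1 :=
  fun h => (pow_lt_one₀ (norm_nonneg q) hq1 (Nat.one_le_iff_ne_zero.mp hm)).ne
    (by rw [← norm_pow, h, norm_one])

lemma mul_mul_pow_ne_one {q b : ℂ} (hb : ∀ m, 1 ≤ m → b * q ^ m ≠ 1) :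
    ∀ m, 1 ≤ m → b * q * q ^ m ≠ 1 :=
  fun m _ => by simpa [pow_succ', mul_assoc] using hb (m + 1) (by omega)

-- At `b = 1`, `i = 0` this is `q^{k²} / (q)_k²`, which counts partitions with Durfee square `k`.
noncomputable def durfeeTerm (q b : ℂ) (p : ℕ × ℕ) : ℂ :=
  b ^ p.1 * q ^ (p.1 ^ 2) / (qPoch q q p.2 * qPoch q q p.1 * qPoch (b * q) q p.1)

section Durfee

variable {q b : ℂ} (hq : ∀ m, 1 ≤ m → q ^ m ≠ 1)
include hq

lemma one_sub_pow_mul_durfeeTerm_succ_snd (k i : ℕ) :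
    (1 - q ^ (i + 1)) * durfeeTerm q b (k, i + 1) = durfeeTerm q b (k, i) := by
  have hi : 1 - q ^ (i + 1) ≠ 0 := sub_ne_zero.mpr (hq (i + 1) (by omega)).symm
  simp only [durfeeTerm, qPoch_succ_right q q i, ← pow_succ']
  field_simp

variable (hb : ∀ m, 1 ≤ m → b * q ^ m ≠ 1)
include hb

lemma durfeeTerm_mul_base (p : ℕ × ℕ) :
    durfeeTerm q (b * q) p =
      (1 - b * q) *
        (q ^ p.1 * durfeeTerm q b p + (1 - q ^ (p.1 + 1)) * durfeeTerm q b (p.1 + 1, p.2)) := by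
  obtain ⟨k, i⟩ := p
  have hb1 : 1 - b * q ≠ 0 := sub_ne_zero.mpr (by simpa using hb 1 le_rfl : b * q ≠ 1).symm
  have hk : 1 - q ^ (k + 1) ≠ 0 := sub_ne_zero.mpr (hq (k + 1) (by omega)).symm
  have hc := qPoch_mul_ne_zero (mul_mul_pow_ne_one hb) k
  have h1 : (1 - b * q) * qPoch (b * q * q) q k =
      qPoch (b * q) q k * (1 - b * q * q ^ k) := by
    rw [← qPoch_succ_left, qPoch_succ_right]
  simp only [durfeeTerm, qPoch_succ_right q q k, ← pow_succ', qPoch_succ_left (b * q) q k]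
  generalize qPoch (b * q * q) q k = c at h1 hc ⊢
  field_simp [qPoch_self_ne_zero hq k, qPoch_self_ne_zero hq i, qPoch_mul_ne_zero hb k]
  linear_combination -(q ^ k * b ^ k * q ^ (k ^ 2)) * h1

theorem sum_antidiagonal_durfeeTerm (N : ℕ) :
    ∑ p ∈ antidiagonal N, durfeeTerm q b p = (qPoch q q N * qPoch (b * q) q N)⁻¹ := by
  induction N generalizing b with
  | zero => simp [durfeeTerm]
  | succ N ih =>
    have hbq := mul_mul_pow_ne_one hb
    have hb1 : 1 - b * q ≠ 0 := sub_ne_zero.mpr (by simpa using hb 1 le_rfl : b * q ≠ 1).symm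
    have hN : 1 - q ^ (N + 1) ≠ 0 := sub_ne_zero.mpr (hq (N + 1) (by omega)).symm
    have hstep : (1 - q ^ (N + 1)) * ∑ p ∈ antidiagonal (N + 1), durfeeTerm q b p =
        (1 - b * q)⁻¹ * ∑ p ∈ antidiagonal N, durfeeTerm q (b * q) p :=
      calc (1 - q ^ (N + 1)) * ∑ p ∈ antidiagonal (N + 1), durfeeTerm q b p
          = ∑ p ∈ antidiagonal (N + 1), ((1 - q ^ p.1) * durfeeTerm q b p +
              q ^ p.1 * ((1 - q ^ p.2) * durfeeTerm q b p)) := by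
            rw [mul_sum]
            refine sum_congr rfl fun p hp => ?_
            rw [← mem_antidiagonal.mp hp, pow_add]
            ring
        _ = ∑ p ∈ antidiagonal N, ((1 - q ^ (p.1 + 1)) * durfeeTerm q b (p.1 + 1, p.2) +
              q ^ p.1 * durfeeTerm q b p) := by
            rw [sum_add_distrib, Nat.sum_antidiagonal_succ, Nat.sum_antidiagonal_succ',
              sum_add_distrib]
            simp only [one_sub_pow_mul_durfeeTerm_succ_snd hq, pow_zero, sub_self, zero_mul,
              mul_zero, zero_add]
        _ = (1 - b * q)⁻¹ * ∑ p ∈ antidiagonal N, durfeeTerm q (b * q) p := by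
            rw [mul_sum]
            refine sum_congr rfl fun p _ => ?_
            rw [durfeeTerm_mul_base hq hb, inv_mul_cancel_left₀ hb1, add_comm]
    rw [← mul_right_inj' hN, hstep, ih hbq, qPoch_succ_right q q N, ← pow_succ',
      qPoch_succ_left (b * q) q N]
    field_simp [qPoch_self_ne_zero hq N, qPoch_mul_ne_zero hbq N]

end Durfee

theorem sum_Ico_eq_div_qPoch_mul_qPoch {q a : ℂ} (hq : ∀ m, 1 ≤ m → q ^ m ≠ 1)
    (ha : ∀ m, 1 ≤ m → a * q ^ m ≠ 1) {t n : ℕ} (htn : t ≤ n) :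
    ∑ j ∈ Ico t (n + 1), a ^ j * q ^ (j ^ 2) /
        (qPoch q q (n - j) * qPoch q q (j - t) * qPoch (a * q) q (j + t)) =
      a ^ t * q ^ (t ^ 2) / (qPoch q q (n - t) * qPoch (a * q) q (n + t)) := by
  set b := a * q ^ (2 * t) with hb_def
  have hb : ∀ m, 1 ≤ m → b * q ^ m ≠ 1 := fun m hm => by
    simpa [b, mul_assoc, ← pow_add] using ha (2 * t + m) (by omega)
  have hsplit : ∀ k, qPoch (a * q) q (2 * t + k) = qPoch (a * q) q (2 * t) * qPoch (b * q) q k :=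
    fun k => by rw [qPoch_add, hb_def, mul_right_comm]
  calc ∑ j ∈ Ico t (n + 1), a ^ j * q ^ (j ^ 2) /
        (qPoch q q (n - j) * qPoch q q (j - t) * qPoch (a * q) q (j + t))
      = a ^ t * q ^ (t ^ 2) / qPoch (a * q) q (2 * t) *
          ∑ p ∈ antidiagonal (n - t), durfeeTerm q b p := by
        rw [sum_Ico_eq_sum_range, Nat.sum_antidiagonal_eq_sum_range_succ_mk, mul_sum,
          show n + 1 - t = n - t + 1 by omega]
        refine sum_congr rfl fun k _ => ?_
        rw [durfeeTerm, show n - (t + k) = n - t - k by omega, show t + k - t = k by omega,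
          show t + k + t = 2 * t + k by omega, hsplit]
        field_simp
        ring
    _ = a ^ t * q ^ (t ^ 2) / (qPoch q q (n - t) * qPoch (a * q) q (n + t)) := by
        rw [sum_antidiagonal_durfeeTerm hq hb, show n + t = 2 * t + (n - t) by omega, hsplit]
        field_simp

theorem forward_move_F1_general (q a : ℂ) (hq1 : ‖q‖ < 1)
    (ha : ∀ m : ℕ, 1 ≤ m → a * q ^ m ≠ 1)
    (α β : ℕ → ℂ) (h : IsBaileyPair q a α β) :
    IsBaileyPair q a
      (fun n => a ^ n * q ^ (n ^ 2) * α n)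
      (fun n => ∑ j ∈ Finset.range (n + 1),
        a ^ j * q ^ (j ^ 2) / qPoch q q (n - j) * β j) := by
  intro n
  have hq : ∀ m, 1 ≤ m → q ^ m ≠ 1 := fun _ => pow_ne_one_of_norm_lt_one hq1
  simp only [show ∀ j, β j = _ from h, mul_sum, range_eq_Ico]
  rw [← sum_Ico_Ico_comm]
  refine sum_congr rfl fun t ht => ?_
  calc _ = α t * ∑ j ∈ Ico t (n + 1), a ^ j * q ^ (j ^ 2) /
          (qPoch q q (n - j) * qPoch q q (j - t) * qPoch (a * q) q (j + t)) := by
        rw [mul_sum]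
        exact sum_congr rfl fun j _ => by ring
    _ = _ := by
        rw [sum_Ico_eq_div_qPoch_mul_qPoch hq ha (Nat.lt_succ_iff.mp (mem_Ico.mp ht).2)]
        ring

theorem forward_move_F1 (q a : ℂ) (hq0 : 0 < ‖q‖) (hq1 : ‖q‖ < 1)
    (ha : ∀ m : ℕ, 1 ≤ m → a * q ^ m ≠ 1)
    (α β : ℕ → ℂ) (h : IsBaileyPair q a α β) :
    IsBaileyPair q a
      (fun n => a ^ n * q ^ (n ^ 2) * α n)
      (fun n => ∑ j ∈ Finset.range (n + 1),
        a ^ j * q ^ (j ^ 2) / qPoch q q (n - j) * β j) :=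
  forward_move_F1_general q a hq1 ha α β h
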